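/- arXiv:1807.09676 — 2 statements merged into one kernel-verified Lean document; each statement's English description precedes it below -/
import Mathlib

section
/- Let n, M be natural numbers, let a : Fin n → ℝ with a(i) > 0 for all i, let V > 0 and t₀ ∈ ℝ. The following are equivalent: (i) there exists an assignment f : Fin n → Fin M such that for every b : Fin M, Σ_{i : f(i) = b} a(i) ≤ V (a bin packing of the items of sizes a(i) into M bins of capacity V); (ii) there exist f : Fin n → Fin M and start times s : Fin n → ℝ such that t₀ ≤ s(i) and s(i) + a(i) ≤ t₀ + V for every i, and for every i ≠ j with f(i) = f(j) the half-open intervals [s(i), s(i)+a(i)) and [s(j), s(j)+a(j)) are disjoint (a non-overlapping schedule of the n jobs on M machines within the time window [t₀, t₀+V]). -/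
/-!
Packing to scheduling: on each machine run its jobs back to back in index order, starting at `t₀`;
the last job on machine `b` then ends at `t₀` plus the load of bin `b`, which is at most `t₀ + V`.
Scheduling to packing: the jobs on one machine occupy pairwise disjoint subintervals of
`[t₀, t₀ + V)`, so by additivity of Lebesgue measure their total length is at most `V`.
-/

open Finset MeasureTheory

section BackToBack

variable {ι κ R : Type*} [Fintype ι] [LinearOrder ι] [DecidableEq κ]
  [AddCommMonoid R] [PartialOrder R] [IsOrderedAddMonoid R]

def backToBackOffset (f : ι → κ) (a : ι → R) (i : ι) : R :=
  ∑ j ∈ univ.filter (fun j => f j = f i ∧ j < i), a j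

variable {f : ι → κ} {a : ι → R}

theorem backToBackOffset_nonneg (ha : ∀ j, 0 ≤ a j) (i : ι) : 0 ≤ backToBackOffset f a i :=
  sum_nonneg fun j _ => ha j

theorem backToBackOffset_add_le_sum (ha : ∀ j, 0 ≤ a j) {i : ι} {T : Finset ι}
    (hT : ∀ j, f j = f i → j ≤ i → j ∈ T) :
    backToBackOffset f a i + a i ≤ ∑ j ∈ T, a j := by
  have hi : i ∉ univ.filter (fun j => f j = f i ∧ j < i) := by simp
  rw [backToBackOffset, add_comm, ← sum_insert hi]
  refine sum_le_sum_of_subset_of_nonneg (fun j hj => ?_) fun j _ _ => ha j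
  rcases mem_insert.1 hj with rfl | hj
  · exact hT j rfl le_rfl
  · obtain ⟨hfj, hji⟩ := (mem_filter.1 hj).2
    exact hT j hfj hji.le

theorem backToBackOffset_add_le_sum_fiber (ha : ∀ j, 0 ≤ a j) (i : ι) :
    backToBackOffset f a i + a i ≤ ∑ j ∈ univ.filter (fun j => f j = f i), a j :=
  backToBackOffset_add_le_sum ha fun j hfj _ => mem_filter.2 ⟨mem_univ j, hfj⟩

theorem backToBackOffset_add_le_of_lt (ha : ∀ j, 0 ≤ a j) {i i' : ι} (hii' : i < i')
    (hf : f i = f i') : backToBackOffset f a i + a i ≤ backToBackOffset f a i' :=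
  backToBackOffset_add_le_sum ha fun j hfj hji =>
    mem_filter.2 ⟨mem_univ j, hfj.trans hf, hji.trans_lt hii'⟩

theorem disjoint_Ico_backToBackOffset (ha : ∀ j, 0 ≤ a j) (t : R) {i i' : ι} (hii' : i ≠ i')
    (hf : f i = f i') :
    Disjoint (Set.Ico (t + backToBackOffset f a i) (t + backToBackOffset f a i + a i))
      (Set.Ico (t + backToBackOffset f a i') (t + backToBackOffset f a i' + a i')) := by
  have ends_before {j j' : ι} (hjj' : j < j') (hfj : f j = f j') :
      t + backToBackOffset f a j + a j ≤ t + backToBackOffset f a j' := by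
    rw [add_assoc]
    exact add_le_add_right (backToBackOffset_add_le_of_lt ha hjj' hfj) t
  rcases hii'.lt_or_gt with h | h
  · exact Set.Ico_disjoint_Ico_same.mono_right (Set.Ico_subset_Ico_left (ends_before h hf))
  · exact (Set.Ico_disjoint_Ico_same.mono_right
      (Set.Ico_subset_Ico_left (ends_before h hf.symm))).symm

end BackToBack

theorem sum_le_of_pairwiseDisjoint_Ico_subset {ι : Type*} {S : Finset ι} {s a : ι → ℝ}
    {c d : ℝ} (ha : ∀ i ∈ S, 0 ≤ a i) (hcd : c ≤ d)
    (hdisj : (S : Set ι).PairwiseDisjoint fun i => Set.Ico (s i) (s i + a i))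
    (hsub : ∀ i ∈ S, Set.Ico (s i) (s i + a i) ⊆ Set.Ico c d) :
    ∑ i ∈ S, a i ≤ d - c := by
  have hvol : volume (⋃ i ∈ S, Set.Ico (s i) (s i + a i)) ≤ volume (Set.Ico c d) :=
    measure_mono (Set.iUnion₂_subset hsub)
  rw [measure_biUnion_finset hdisj fun _ _ => measurableSet_Ico] at hvol
  simp only [Real.volume_Ico, add_sub_cancel_left] at hvol
  rwa [← ENNReal.ofReal_sum_of_nonneg ha, ENNReal.ofReal_le_ofReal_iff (sub_nonneg.2 hcd)] at hvol

/-- Core of the NP-completeness reduction (Theorem 1): packing `n` items of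
sizes `a i > 0` into `M` bins of capacity `V` is equivalent to non-overlapping
scheduling of `n` jobs of durations `a i` on `M` machines within the time window
`[t₀, t₀ + V]`. -/
theorem binpacking_iff_schedule (n M : ℕ) (a : Fin n → ℝ) (ha : ∀ i, 0 < a i)
    (V : ℝ) (hV : 0 < V) (t₀ : ℝ) :
    (∃ f : Fin n → Fin M, ∀ b : Fin M,
        ∑ i ∈ Finset.univ.filter fun i => f i = b, a i ≤ V) ↔
    (∃ (f : Fin n → Fin M) (s : Fin n → ℝ),
        (∀ i, t₀ ≤ s i ∧ s i + a i ≤ t₀ + V) ∧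
        ∀ i j, i ≠ j → f i = f j →
          Disjoint (Set.Ico (s i) (s i + a i)) (Set.Ico (s j) (s j + a j))) := by
  have ha₀ : ∀ i, 0 ≤ a i := fun i => (ha i).le
  constructor
  · rintro ⟨f, hf⟩
    refine ⟨f, fun i => t₀ + backToBackOffset f a i, fun i => ⟨?_, ?_⟩,
      fun i j => disjoint_Ico_backToBackOffset ha₀ t₀⟩
    · exact le_add_of_nonneg_right (backToBackOffset_nonneg ha₀ i)
    · linarith [backToBackOffset_add_le_sum_fiber (f := f) ha₀ i, hf (f i)]
  · rintro ⟨f, s, hwin, hdisj⟩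
    refine ⟨f, fun b => ?_⟩
    have hfiber := sum_le_of_pairwiseDisjoint_Ico_subset (S := univ.filter fun i => f i = b)
      (s := s) (fun i _ => ha₀ i) (le_add_of_nonneg_right hV.le)
      (fun i hi j hj hij => hdisj i j hij ((mem_filter.1 hi).2.trans (mem_filter.1 hj).2.symm))
      fun i _ => Set.Ico_subset_Ico (hwin i).1 (hwin i).2
    rwa [add_sub_cancel_left] at hfiber
end

section
/- Let J be a finite set of passengers, D a set of destinations, d : J → D, τ : D × ℝ → ℝ a time-dependent travel time from the terminal to each destination (depending on the trip's departure time), a : J → ℝ the mass-transit departure time of each passenger, γ a natural number, G : J → Fin γ an assignment of passengers to groups, and t : Fin γ → ℝ the terminal departure time of each group. Then for any two passengers j', j'' ∈ J with d(j') = d(j''), swapping their group assignments preserves the total travel time: Σ_{j ∈ J} (t(G'(j)) + τ(d(j), t(G'(j))) − a(j)) = Σ_{j ∈ J} (t(G(j)) + τ(d(j), t(G(j))) − a(j)), where G' = G ∘ swap_{j',j''} and swap_{j',j''} is the transposition of j' and j''. -/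
/-! The summand of passenger `j` depends on `j` only through `a j`, which is not moved, and
through the destination `d j`, which the swap preserves. Hence the swapped total is a
reindexing of the original one by the transposition. -/

theorem Equiv.apply_swap_apply_of_apply_eq {α β : Type*} [DecidableEq α] {d : α → β}
    {x y : α} (hxy : d x = d y) (z : α) : d (Equiv.swap x y z) = d z := by
  rw [Equiv.swap_apply_def]
  split_ifs with hx hy
  · rw [hx, hxy]
  · rw [hy, hxy]
  · rfl

theorem Equiv.sum_apply_comp_perm_of_apply_eq {J D α M : Type*} [Fintype J]
    [AddCommMonoid M] (F : D → α → M) (d : J → D) (G : J → α) (σ : Equiv.Perm J)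
    (hσ : ∀ j, d (σ j) = d j) :
    ∑ j, F (d j) (G (σ j)) = ∑ j, F (d j) (G j) := by
  calc ∑ j, F (d j) (G (σ j)) = ∑ j, F (d (σ j)) (G (σ j)) := by simp only [hσ]
    _ = ∑ j, F (d j) (G j) := Equiv.sum_comp σ fun j => F (d j) (G j)

/-- Time-dependent extension of Lemma 1 (used in the proof of Proposition 1):
with time-dependent terminal-to-destination travel times `τ`, swapping the group
assignments of two passengers `j'`, `j''` with a common destination (keeping all
group departure times fixed) preserves the total travel time. -/
theorem swap_preserves_travel_time_time_dependent (J : Type*) [Fintype J]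
    [DecidableEq J] (D : Type*) (d : J → D) (τ : D → ℝ → ℝ) (a : J → ℝ)
    (γ : ℕ) (G : J → Fin γ) (t : Fin γ → ℝ)
    (j' j'' : J) (hd : d j' = d j'') :
    (∑ j, (t ((G ∘ Equiv.swap j' j'') j)
        + τ (d j) (t ((G ∘ Equiv.swap j' j'') j)) - a j)) =
      ∑ j, (t (G j) + τ (d j) (t (G j)) - a j) := by
  simp only [Finset.sum_sub_distrib, Function.comp_apply]
  congr 1
  exact Equiv.sum_apply_comp_perm_of_apply_eq (fun x g => t g + τ x (t g)) d G _
    (Equiv.apply_swap_apply_of_apply_eq hd)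
end
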